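/- Let N > 2 be an integer, p > 1, and k < 0 with (1-p)·k + p - N > 0. Let 0 < b ≤ π and suppose U : [0, b) → ℝ is differentiable on [0, b) with continuous derivative, U(0) = 0, and U satisfies the U-equation on (0, b). Then U'(0) = ((1-p)·k + p - N)/(N-1) > 0 and U'(x) > 0 for all x ∈ [0, b). -/

import Mathlib

/-!
As `x → 0⁺`, `U x / x → U'(0)` and `x · cot x → 1`, so `U x · cot x → U'(0)`; letting `x → 0⁺`
in the equation and using the continuity of `U'` gives `U'(0) = (1-p)k + p - N + (2-N) U'(0)`.

For positivity, let `x₀` be the first zero of `U'`, so that `U x₀ > 0`. The equation reads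
`((p-1)U² + 1) U' = -(U² + 1) G` with `G = (N-2) U cot - k(1-p)(U² + 1) - (p-N)`, hence `G < 0`
on `(0, x₀)` and `G x₀ = 0`, which forces `G'(x₀) ≥ 0`. But `U'(x₀) = 0` leaves only the
cotangent term: `G'(x₀) = -(N-2) U(x₀) / sin² x₀ < 0`.
-/

noncomputable section
open Real Set Filter Topology

/-- `U` satisfies the U-equation (for parameters `p`, `N`, `k`) on the set `I`:
`((p-1)U² + 1)U' = k(1-p)(U² + 1)² + (U² + 1)(p - N + (2-N)·U·cot x)`. -/
def UEqOn (p : ℝ) (N : ℕ) (k : ℝ) (U : ℝ → ℝ) (I : Set ℝ) : Prop :=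
  ∀ x ∈ I,
    ((p - 1) * (U x) ^ 2 + 1) * deriv U x =
      k * (1 - p) * ((U x) ^ 2 + 1) ^ 2
        + ((U x) ^ 2 + 1) * (p - (N : ℝ) + (2 - (N : ℝ)) * U x * Real.cot x)

namespace Real

theorem hasDerivAt_cot {x : ℝ} (hx : sin x ≠ 0) : HasDerivAt cot (-1 / sin x ^ 2) x := by
  have hcot : cot = fun y => cos y / sin y := funext cot_eq_cos_div_sin
  rw [hcot]
  refine ((hasDerivAt_cos x).div (hasDerivAt_sin x) hx).congr_deriv ?_
  rw [← sin_sq_add_cos_sq x]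
  ring

theorem tendsto_mul_cot_nhdsNE_zero : Tendsto (fun x => x * cot x) (𝓝[≠] 0) (𝓝 1) := by
  have hcont : ContinuousAt (fun x => cos x / sinc x) 0 :=
    continuous_cos.continuousAt.div continuous_sinc.continuousAt (by simp [sinc_zero])
  have hlim := hcont.tendsto.mono_left (nhdsWithin_le_nhds (s := {0}ᶜ))
  simp only [cos_zero, sinc_zero, div_one] at hlim
  refine hlim.congr' ?_
  filter_upwards [self_mem_nhdsWithin] with x (hx : x ≠ 0)
  rw [sinc_of_ne_zero hx, cot_eq_cos_div_sin]
  field_simp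

end Real

theorem HasDerivAt.nonneg_of_eventually_le_left {g : ℝ → ℝ} {c a : ℝ} (hg : HasDerivAt g c a)
    (hle : ∀ᶠ x in 𝓝[<] a, g x ≤ g a) : 0 ≤ c := by
  have hslope :=
    (hasDerivWithinAt_iff_tendsto_slope' (s := Iio a) (lt_irrefl a)).1 hg.hasDerivWithinAt
  refine ge_of_tendsto hslope ?_
  filter_upwards [hle, self_mem_nhdsWithin] with x hx (hxa : x < a)
  rw [slope_def_field]
  exact div_nonneg_of_nonpos (by linarith) (by linarith)

theorem ContinuousOn.exists_zero_pos_before {φ : ℝ → ℝ} {a y : ℝ} (hφ : ContinuousOn φ (Icc a y))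
    (hay : a ≤ y) (ha : 0 < φ a) (hy : φ y ≤ 0) :
    ∃ x₀ ∈ Ioc a y, φ x₀ = 0 ∧ ∀ x ∈ Ico a x₀, 0 < φ x := by
  set S := Icc a y ∩ φ ⁻¹' Iic 0
  have hS : IsClosed S := hφ.preimage_isClosed_of_isClosed isClosed_Icc isClosed_Iic
  have hx₀ : sInf S ∈ S := hS.csInf_mem ⟨y, ⟨hay, le_rfl⟩, hy⟩ ⟨a, fun x hx => hx.1.1⟩
  have hpos : ∀ x ∈ Ico a (sInf S), 0 < φ x := fun x hx => by
    by_contra! hxφ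
    exact hx.2.not_ge (csInf_le ⟨a, fun z hz => hz.1.1⟩ ⟨⟨hx.1, hx.2.le.trans hx₀.1.2⟩, hxφ⟩)
  have hax₀ : a < sInf S := hx₀.1.1.lt_of_ne fun h => (h ▸ hx₀.2 : φ a ≤ 0).not_gt ha
  -- the intermediate value theorem gives a zero of `φ` in `[a, sInf S]`, which can only be `sInf S`
  obtain ⟨z, hz, hφz⟩ := intermediate_value_Icc' hx₀.1.1 (hφ.mono (Icc_subset_Icc_right hx₀.1.2))
    ⟨hx₀.2, ha.le⟩
  have hz : z = sInf S := hz.2.eq_of_not_lt fun hlt => (hpos z ⟨hz.1, hlt⟩).ne' hφz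
  exact ⟨sInf S, ⟨hax₀, hx₀.1.2⟩, hz ▸ hφz, hpos⟩

def UEqFactor (p : ℝ) (N : ℕ) (k : ℝ) (U : ℝ → ℝ) (x : ℝ) : ℝ :=
  ((N : ℝ) - 2) * U x * cot x - k * (1 - p) * (U x ^ 2 + 1) - (p - N)

theorem hasDerivAt_UEqFactor {p k x : ℝ} {N : ℕ} {U : ℝ → ℝ} (hU : HasDerivAt U 0 x)
    (hx : sin x ≠ 0) :
    HasDerivAt (UEqFactor p N k U) (-(((N : ℝ) - 2) * U x / sin x ^ 2)) x := by
  have := (((hU.const_mul ((N : ℝ) - 2)).mul (hasDerivAt_cot hx)).sub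
    (((hU.pow 2).add_const 1).const_mul (k * (1 - p)))).sub_const (p - N)
  refine (this.congr_deriv ?_).congr_of_eventuallyEq (.of_forall fun y => rfl)
  ring

namespace UEqOn

variable {p k b : ℝ} {N : ℕ} {U : ℝ → ℝ} {I : Set ℝ}

theorem mul_deriv_eq (h : UEqOn p N k U I) {x : ℝ} (hx : x ∈ I) :
    ((p - 1) * U x ^ 2 + 1) * deriv U x = -((U x ^ 2 + 1) * UEqFactor p N k U x) := by
  rw [h x hx, UEqFactor]
  ring

theorem UEqFactor_eq_zero (h : UEqOn p N k U I) {x : ℝ} (hx : x ∈ I) (hU : deriv U x = 0) :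
    UEqFactor p N k U x = 0 := by
  have := h.mul_deriv_eq hx
  rw [hU, mul_zero, zero_eq_neg] at this
  exact (mul_eq_zero.1 this).resolve_left (by positivity)

theorem UEqFactor_neg (h : UEqOn p N k U I) (hp : 1 ≤ p) {x : ℝ} (hx : x ∈ I)
    (hU : 0 < deriv U x) : UEqFactor p N k U x < 0 := by
  have hden : 0 < (p - 1) * U x ^ 2 + 1 := by nlinarith [sq_nonneg (U x)]
  have := h.mul_deriv_eq hx
  have hprod : 0 < (U x ^ 2 + 1) * -UEqFactor p N k U x := by
    rw [mul_neg, ← this]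
    positivity
  linarith [pos_of_mul_pos_right hprod (by positivity)]

theorem sub_one_mul_derivWithin_zero (h : UEqOn p N k U (Ioo 0 b)) (hb : 0 < b)
    (hd : DifferentiableWithinAt ℝ U (Ici 0) 0)
    (hdc : ContinuousWithinAt (derivWithin U (Ici 0)) (Ioi 0) 0) (hU0 : U 0 = 0) :
    ((N : ℝ) - 1) * derivWithin U (Ici 0) 0 = (1 - p) * k + p - N := by
  set u₀ := derivWithin U (Ici 0) 0
  have hU : Tendsto U (𝓝[>] 0) (𝓝 0) := by
    simpa [hU0] using (hd.continuousWithinAt.mono Ioi_subset_Ici_self).tendsto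
  have hslope : Tendsto (fun x => U x / x) (𝓝[>] 0) (𝓝 u₀) := by
    refine ((hasDerivWithinAt_iff_tendsto_slope' (lt_irrefl 0)).1
      (hd.hasDerivWithinAt.mono Ioi_subset_Ici_self)).congr fun x => ?_
    simp [slope_def_field, hU0]
  have hUcot : Tendsto (fun x => U x * cot x) (𝓝[>] 0) (𝓝 u₀) := by
    have := hslope.mul
      (tendsto_mul_cot_nhdsNE_zero.mono_left (nhdsWithin_mono _ fun x hx => ne_of_gt hx))
    rw [mul_one] at this
    refine this.congr' ?_
    filter_upwards [self_mem_nhdsWithin] with x (hx : 0 < x)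
    field_simp
  have hderiv : Tendsto (deriv U) (𝓝[>] 0) (𝓝 u₀) := by
    refine hdc.tendsto.congr' ?_
    filter_upwards [self_mem_nhdsWithin] with x (hx : 0 < x)
    exact derivWithin_of_mem_nhds (Ici_mem_nhds hx)
  have hlhs : Tendsto (fun x => ((p - 1) * U x ^ 2 + 1) * deriv U x) (𝓝[>] 0)
      (𝓝 (((p - 1) * 0 ^ 2 + 1) * u₀)) :=
    ((tendsto_const_nhds.mul (hU.pow 2)).add tendsto_const_nhds).mul hderiv
  have hrhs : Tendsto (fun x => k * (1 - p) * (U x ^ 2 + 1) ^ 2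
      + (U x ^ 2 + 1) * (p - N + (2 - N) * U x * cot x)) (𝓝[>] 0)
      (𝓝 (k * (1 - p) * (0 ^ 2 + 1) ^ 2 + (0 ^ 2 + 1) * (p - N + (2 - N) * u₀))) := by
    have hsq := (hU.pow 2).add (tendsto_const_nhds (x := (1 : ℝ)))
    refine ((tendsto_const_nhds.mul (hsq.pow 2)).add
      (hsq.mul (tendsto_const_nhds.add (tendsto_const_nhds.mul hUcot)))).congr fun x => ?_
    ring
  have heq : ∀ᶠ x in 𝓝[>] 0, ((p - 1) * U x ^ 2 + 1) * deriv U x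
      = k * (1 - p) * (U x ^ 2 + 1) ^ 2 + (U x ^ 2 + 1) * (p - N + (2 - N) * U x * cot x) := by
    filter_upwards [Ioo_mem_nhdsGT hb] with x hx using h x hx
  linear_combination tendsto_nhds_unique (hlhs.congr' heq) hrhs

theorem derivWithin_pos (h : UEqOn p N k U (Ioo 0 b)) (hN : 2 < N) (hp : 1 < p) (hb : b ≤ π)
    (hd : ∀ x ∈ Ico 0 b, DifferentiableWithinAt ℝ U (Ici 0) x)
    (hdc : ContinuousOn (derivWithin U (Ici 0)) (Ico 0 b)) (hU0 : U 0 = 0)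
    (h0 : 0 < derivWithin U (Ici 0) 0) :
    ∀ x ∈ Ico 0 b, 0 < derivWithin U (Ici 0) x := by
  by_contra! ⟨y, hy, hy0⟩
  obtain ⟨x₀, ⟨hx₀, hx₀y⟩, hzero, hpos⟩ :=
    (hdc.mono (Icc_subset_Ico_right hy.2)).exists_zero_pos_before hy.1 h0 hy0
  have hx₀b : x₀ < b := hx₀y.trans_lt hy.2
  have hderiv : ∀ x ∈ Ioo 0 b, HasDerivAt U (derivWithin U (Ici 0) x) x := fun x hx => by
    rw [derivWithin_of_mem_nhds (Ici_mem_nhds hx.1)]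
    exact ((hd x (Ioo_subset_Ico_self hx)).differentiableAt (Ici_mem_nhds hx.1)).hasDerivAt
  have hderiv_pos : ∀ x ∈ Ioo 0 x₀, 0 < deriv U x := fun x hx => by
    rw [(hderiv x ⟨hx.1, hx.2.trans hx₀b⟩).deriv]
    exact hpos x (Ioo_subset_Ico_self hx)
  have hUx₀ : 0 < U x₀ := by
    have hmono : StrictMonoOn U (Icc 0 x₀) := strictMonoOn_of_deriv_pos (convex_Icc 0 x₀)
      (fun x hx => (hd x ⟨hx.1, hx.2.trans_lt hx₀b⟩).continuousWithinAt.mono Icc_subset_Ici_self)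
      (fun x hx => hderiv_pos x (by rwa [interior_Icc] at hx))
    simpa [hU0] using hmono (left_mem_Icc.2 hx₀.le) (right_mem_Icc.2 hx₀.le) hx₀
  have hsin : sin x₀ ≠ 0 := (sin_pos_of_pos_of_lt_pi hx₀ (hx₀b.trans_le hb)).ne'
  have hU'x₀ : HasDerivAt U 0 x₀ := hzero ▸ hderiv x₀ ⟨hx₀, hx₀b⟩
  have hle : ∀ᶠ x in 𝓝[<] x₀, UEqFactor p N k U x ≤ UEqFactor p N k U x₀ := by
    rw [h.UEqFactor_eq_zero ⟨hx₀, hx₀b⟩ hU'x₀.deriv]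
    filter_upwards [Ioo_mem_nhdsLT hx₀] with x hx
    exact (h.UEqFactor_neg hp.le ⟨hx.1, hx.2.trans hx₀b⟩ (hderiv_pos x hx)).le
  have hN2 : (0 : ℝ) < N - 2 := by
    have : (2 : ℝ) < N := by exact_mod_cast hN
    linarith
  have : 0 < ((N : ℝ) - 2) * U x₀ / sin x₀ ^ 2 := by positivity
  linarith [(hasDerivAt_UEqFactor hU'x₀ hsin).nonneg_of_eventually_le_left hle]

end UEqOn

theorem U_increasing_general (N : ℕ) (hN : 2 < N) (p : ℝ) (hp : 1 < p) (k : ℝ)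
    (hkp : 0 < (1 - p) * k + p - (N : ℝ))
    (b : ℝ) (hb0 : 0 < b) (hb : b ≤ π)
    (U : ℝ → ℝ)
    (hd : ∀ x ∈ Ico (0 : ℝ) b, DifferentiableWithinAt ℝ U (Ici 0) x)
    (hdc : ContinuousOn (derivWithin U (Ici 0)) (Ico 0 b))
    (hU0 : U 0 = 0)
    (heq : UEqOn p N k U (Ioo 0 b)) :
    derivWithin U (Ici 0) 0 = ((1 - p) * k + p - (N : ℝ)) / ((N : ℝ) - 1) ∧
    0 < ((1 - p) * k + p - (N : ℝ)) / ((N : ℝ) - 1) ∧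
    ∀ x ∈ Ico (0 : ℝ) b, 0 < derivWithin U (Ici 0) x := by
  have hN1 : (0 : ℝ) < N - 1 := by
    have : (2 : ℝ) < N := by exact_mod_cast hN
    linarith
  have h0b : (0 : ℝ) ∈ Ico 0 b := ⟨le_rfl, hb0⟩
  have hU'0 : derivWithin U (Ici 0) 0 = ((1 - p) * k + p - N) / (N - 1) := by
    rw [eq_div_iff hN1.ne', mul_comm]
    exact heq.sub_one_mul_derivWithin_zero hb0 (hd 0 h0b)
      ((hdc 0 h0b).mono_of_mem_nhdsWithin (Ico_mem_nhdsGT hb0)) hU0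
  have hpos : 0 < ((1 - p) * k + p - N) / ((N : ℝ) - 1) := div_pos hkp hN1
  exact ⟨hU'0, hpos, heq.derivWithin_pos hN hp hb hd hdc hU0 (hU'0 ▸ hpos)⟩

/-- A solution of the U-equation with `U(0) = 0` is strictly increasing:
`U'(0) = ((1-p)k + p - N)/(N-1) > 0` and `U' > 0` on `[0,b)`. -/
theorem U_increasing (N : ℕ) (hN : 2 < N) (p : ℝ) (hp : 1 < p) (k : ℝ) (hk : k < 0)
    (hkp : 0 < (1 - p) * k + p - (N : ℝ))
    (b : ℝ) (hb0 : 0 < b) (hb : b ≤ π)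
    (U : ℝ → ℝ)
    (hd : ∀ x ∈ Ico (0 : ℝ) b, DifferentiableWithinAt ℝ U (Ici 0) x)
    (hdc : ContinuousOn (derivWithin U (Ici 0)) (Ico 0 b))
    (hU0 : U 0 = 0)
    (heq : UEqOn p N k U (Ioo 0 b)) :
    derivWithin U (Ici 0) 0 = ((1 - p) * k + p - (N : ℝ)) / ((N : ℝ) - 1) ∧
    0 < ((1 - p) * k + p - (N : ℝ)) / ((N : ℝ) - 1) ∧
    ∀ x ∈ Ico (0 : ℝ) b, 0 < derivWithin U (Ici 0) x :=
  U_increasing_general N hN p hp k hkp b hb0 hb U hd hdc hU0 heq
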